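/- Let G ⊆ ℝ^m be open and F ⊆ closedBall(0,1) be closed with F ∩ sphere(0,1) ⊆ G. Then there exist an open cone C ⊆ ℝ^m (i.e., a set with x ∈ C ⟹ tx ∈ C for all t > 0) and r ∈ (0,1) such that F \ ball(0,r) ⊆ C ∩ (closedBall(0,1) \ ball(0,r)) ⊆ G. -/

import Mathlib

open Metric

theorem cone_separation (m : ℕ) (G F : Set (EuclideanSpace ℝ (Fin m)))
    (hG : IsOpen G) (hF : IsClosed F) (hF1 : F ⊆ closedBall 0 1)
    (hFG : F ∩ sphere 0 1 ⊆ G) :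
    ∃ (C : Set (EuclideanSpace ℝ (Fin m))) (r : ℝ),
      IsOpen C ∧ (∀ x ∈ C, ∀ t : ℝ, 0 < t → t • x ∈ C) ∧ r ∈ Set.Ioo (0 : ℝ) 1 ∧
      F \ ball 0 r ⊆ C ∩ (closedBall 0 1 \ ball 0 r) ∧
      C ∩ (closedBall 0 1 \ ball 0 r) ⊆ G := by
  have hFc : IsCompact F := (isCompact_closedBall _ _).of_isClosed_subset hF hF1
  set K := F ∩ sphere 0 1 with hKdef
  have hKc : IsCompact K := hFc.inter_right isClosed_sphere
  by_cases hKne : K.Nonempty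
  · -- main case
    obtain ⟨ε, hε, hthick⟩ := hKc.exists_thickening_subset_open hG hFG
    -- bad set A : points of F far from K
    set A := F ∩ {x | ε/4 ≤ infDist x K} with hAdef
    have hAc : IsCompact A :=
      hFc.inter_right (isClosed_le continuous_const (continuous_infDist_pt K))
    have hA1 : ∀ x ∈ A, ‖x‖ < 1 := by
      intro x hx
      have hx1 : ‖x‖ ≤ 1 := by
        have := hF1 hx.1
        simpa [mem_closedBall, dist_eq_norm] using this
      rcases lt_or_eq_of_le hx1 with h | h
      · exact h
      · exfalso
        have hxK : x ∈ K := ⟨hx.1, by simpa [mem_sphere_iff_norm] using h⟩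
        have h0 : infDist x K = 0 := infDist_zero_of_mem hxK
        have h2 : ε/4 ≤ infDist x K := hx.2
        rw [h0] at h2
        linarith
    obtain ⟨r0, hr01, hr0A⟩ : ∃ r0 < 1, ∀ x ∈ A, ‖x‖ ≤ r0 := by
      rcases Set.eq_empty_or_nonempty A with hAe | hAne
      · exact ⟨0, by norm_num, by simp [hAe]⟩
      · obtain ⟨a, haA, ha⟩ := hAc.exists_isMaxOn hAne continuous_norm.continuousOn
        exact ⟨‖a‖, hA1 a haA, fun x hx => ha hx⟩
    set η := min ((1 - r0)/2) (min (ε/8) (1/2)) with hηdef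
    have hη0 : 0 < η :=
      lt_min (by linarith) (lt_min (by linarith) (by norm_num))
    have hη12 : η ≤ 1/2 := le_trans (min_le_right _ _) (min_le_right _ _)
    have hηε : η ≤ ε/8 := le_trans (min_le_right _ _) (min_le_left _ _)
    have hηr0 : η < 1 - r0 := lt_of_le_of_lt (min_le_left _ _) (by linarith)
    set r := 1 - η with hrdef
    have hr : r ∈ Set.Ioo (0:ℝ) 1 := ⟨by simp only [hrdef]; linarith, by simp only [hrdef]; linarith⟩
    -- the cone
    set C := {x : EuclideanSpace ℝ (Fin m) | x ≠ 0 ∧ infDist (‖x‖⁻¹ • x) K < ε/2}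
      with hCdef
    -- distance from x to its normalization
    have hdist : ∀ x : EuclideanSpace ℝ (Fin m), x ≠ 0 → ‖x‖ ≤ 1 →
        dist (‖x‖⁻¹ • x) x = 1 - ‖x‖ := by
      intro x hx hx1
      have hn0 : 0 < ‖x‖ := norm_pos_iff.mpr hx
      have hinv : 1 ≤ ‖x‖⁻¹ := one_le_inv_iff₀.mpr ⟨hn0, hx1⟩
      have : ‖x‖⁻¹ • x - x = (‖x‖⁻¹ - 1) • x := by
        rw [sub_smul, one_smul]
      rw [dist_eq_norm, this, norm_smul, Real.norm_eq_abs,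
        abs_of_nonneg (by linarith)]
      field_simp
    -- C is open
    have hCopen : IsOpen C := by
      have hcont : ContinuousOn (fun x : EuclideanSpace ℝ (Fin m) => ‖x‖⁻¹ • x)
          {(0 : EuclideanSpace ℝ (Fin m))}ᶜ := by
        apply ContinuousOn.smul (f := fun x : EuclideanSpace ℝ (Fin m) => ‖x‖⁻¹) (g := fun x => x)
        · exact (continuous_norm.continuousOn).inv₀ fun x hx =>
            norm_ne_zero_iff.mpr (by simpa using hx)
        · exact continuous_id.continuousOn
      have hCeq : C = {(0 : EuclideanSpace ℝ (Fin m))}ᶜ ∩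
          (fun x : EuclideanSpace ℝ (Fin m) => ‖x‖⁻¹ • x) ⁻¹'
            {y | infDist y K < ε/2} := by
        ext x
        simp [hCdef, Set.mem_setOf_eq, and_comm]
      rw [hCeq]
      exact hcont.isOpen_inter_preimage isOpen_compl_singleton
        (isOpen_lt (continuous_infDist_pt K) continuous_const)
    -- C is a cone
    have hCcone : ∀ x ∈ C, ∀ t : ℝ, 0 < t → t • x ∈ C := by
      intro x hx t ht
      obtain ⟨hx0, hxd⟩ := hx
      have hn0 : ‖x‖ ≠ 0 := norm_ne_zero_iff.mpr hx0
      refine ⟨smul_ne_zero (ne_of_gt ht) hx0, ?_⟩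
      have : ‖t • x‖⁻¹ • (t • x) = ‖x‖⁻¹ • x := by
        rw [norm_smul, Real.norm_eq_abs, abs_of_pos ht, smul_smul]
        congr 1
        field_simp
      rw [this]
      exact hxd
    refine ⟨C, r, hCopen, hCcone, hr, ?_, ?_⟩
    · -- F \ ball 0 r ⊆ C ∩ annulus
      intro x hx
      obtain ⟨hxF, hxb⟩ := hx
      have hxr : r ≤ ‖x‖ := by
        simpa [mem_ball, dist_eq_norm, not_lt] using hxb
      have hx1 : ‖x‖ ≤ 1 := by
        simpa [mem_closedBall, dist_eq_norm] using hF1 hxF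
      have hx0 : x ≠ 0 := by
        intro h
        rw [h, norm_zero] at hxr
        linarith [hr.1]
      -- x is not in A since ‖x‖ ≥ r > r0
      have hxA : x ∉ A := by
        intro hxA
        have := hr0A x hxA
        have : r ≤ r0 := le_trans hxr this
        simp only [hrdef] at this
        linarith
      have hxK : infDist x K < ε/4 := by
        by_contra h
        exact hxA ⟨hxF, le_of_not_gt h⟩
      have hd : dist (‖x‖⁻¹ • x) x = 1 - ‖x‖ := hdist x hx0 hx1
      have hinf : infDist (‖x‖⁻¹ • x) K < ε/2 := by
        calc infDist (‖x‖⁻¹ • x) K ≤ infDist x K + dist (‖x‖⁻¹ • x) x :=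
              infDist_le_infDist_add_dist
          _ = infDist x K + (1 - ‖x‖) := by rw [hd]
          _ < ε/4 + η := by
              have : 1 - ‖x‖ ≤ η := by simp only [hrdef] at hxr; linarith
              linarith
          _ < ε/2 := by linarith
      exact ⟨⟨hx0, hinf⟩, ⟨by simpa [mem_closedBall, dist_eq_norm] using hx1,
        by simpa [mem_ball, dist_eq_norm, not_lt] using hxr⟩⟩
    · -- C ∩ annulus ⊆ G
      intro x hx
      obtain ⟨⟨hx0, hxd⟩, hxcb, hxb⟩ := hx
      have hx1 : ‖x‖ ≤ 1 := by
        simpa [mem_closedBall, dist_eq_norm] using hxcb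
      have hxr : r ≤ ‖x‖ := by
        simpa [mem_ball, dist_eq_norm, not_lt] using hxb
      have hd : dist x (‖x‖⁻¹ • x) = 1 - ‖x‖ := by
        rw [dist_comm]; exact hdist x hx0 hx1
      have : infDist x K < ε := by
        calc infDist x K ≤ infDist (‖x‖⁻¹ • x) K + dist x (‖x‖⁻¹ • x) :=
              infDist_le_infDist_add_dist
          _ < ε/2 + (1 - ‖x‖) := by rw [hd]; linarith
          _ ≤ ε/2 + η := by
              have : 1 - ‖x‖ ≤ η := by simp only [hrdef] at hxr; linarith
              linarith
          _ < ε := by linarith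
      exact hthick ((mem_thickening_iff_infDist_lt hKne).mpr this)
  · -- K empty: F is contained in a smaller ball
    have hFlt : ∀ x ∈ F, ‖x‖ < 1 := by
      intro x hx
      have hx1 : ‖x‖ ≤ 1 := by
        simpa [mem_closedBall, dist_eq_norm] using hF1 hx
      rcases lt_or_eq_of_le hx1 with h | h
      · exact h
      · exact absurd ⟨hx, by simpa [mem_sphere_iff_norm] using h⟩
          (fun hk => hKne ⟨x, hk⟩)
    obtain ⟨r0, hr00, hr01, hr0F⟩ : ∃ r0, 0 ≤ r0 ∧ r0 < 1 ∧ ∀ x ∈ F, ‖x‖ ≤ r0 := by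
      rcases Set.eq_empty_or_nonempty F with hFe | hFne
      · exact ⟨0, le_refl _, by norm_num, by simp [hFe]⟩
      · obtain ⟨a, haF, ha⟩ := hFc.exists_isMaxOn hFne continuous_norm.continuousOn
        exact ⟨‖a‖, norm_nonneg _, hFlt a haF, fun x hx => ha hx⟩
    refine ⟨∅, (r0 + 1)/2, isOpen_empty, by simp, ⟨by linarith, by linarith⟩, ?_, by simp⟩
    intro x hx
    exfalso
    obtain ⟨hxF, hxb⟩ := hx
    have h1 : ‖x‖ ≤ r0 := hr0F x hxF
    have h2 : (r0+1)/2 ≤ ‖x‖ := by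
      simpa [mem_ball, dist_eq_norm, not_lt] using hxb
    linarith
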